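/- Let A be a commutative local principal ideal ring of finite length k with finite residue field, and let B_n(A) ⊆ GL_n(A) denote the invertible upper triangular matrices. Suppose n = n₁ + n₂ with n₁, n₂ ≥ 1, and let w₁, w₂ be permutation matrices of sizes n₁ and n₂. Let w = [[0, w₁],[w₂, 0]] and, for a permutation matrix u of size m, let N(u) denote the number of double cosets in B_m(A)\GL_m(A)/B_m(A) whose image in B(𝐤)\GL_m(𝐤)/B(𝐤) corresponds to u under Bruhat decomposition. Then N(w) ≥ N(w₂). -/

import Mathlib

open Matrix

/-- A matrix is invertible upper triangular. -/
def IsUT {A : Type*} [CommRing A] {n : ℕ} (M : Matrix (Fin n) (Fin n) A) : Prop :=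
  M.BlockTriangular id ∧ IsUnit M

/-- Two matrices lie in the same double coset for the subgroup of invertible
upper triangular matrices. -/
def SameDC {A : Type*} [CommRing A] {n : ℕ} (α α' : Matrix (Fin n) (Fin n) A) : Prop :=
  ∃ b c : Matrix (Fin n) (Fin n) A, IsUT b ∧ IsUT c ∧ b * α * c = α'

/-- The `n×n` matrix `[[X₁, α₁],[α₂, X₂]]` with upper-left block of size `n₁ × n₂`. -/
def blk {A : Type*} [CommRing A] {n₁ n₂ : ℕ} (X₁ : Matrix (Fin n₁) (Fin n₂) A)
    (α₁ : Matrix (Fin n₁) (Fin n₁) A) (α₂ : Matrix (Fin n₂) (Fin n₂) A)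
    (X₂ : Matrix (Fin n₂) (Fin n₁) A) : Matrix (Fin (n₁ + n₂)) (Fin (n₁ + n₂)) A :=
  Matrix.reindex finSumFinEquiv (finSumFinEquiv.trans (finCongr (Nat.add_comm n₂ n₁)))
    (Matrix.fromBlocks X₁ α₁ α₂ X₂)

/-- `N(u)`: the number of double cosets in `B \ GLₘ(A) / B` whose image modulo the
maximal ideal lies in the double coset of the matrix `u` over the residue field. -/
noncomputable def overCount (A : Type*) [CommRing A] [IsLocalRing A] {m : ℕ}
    (u : Matrix (Fin m) (Fin m) (A ⧸ IsLocalRing.maximalIdeal A)) : ℕ :=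
  Nat.card (Quot (fun x y : {M : Matrix (Fin m) (Fin m) A // IsUnit M ∧
    SameDC (M.map (Ideal.Quotient.mk (IsLocalRing.maximalIdeal A))) u} =>
      SameDC x.1 y.1))

/-!
Since `π ^ k = 0` and `A ⧸ (π)` is finite, `A` is finite. Lift `w₁` to an invertible `W₁` over
`A`. Then `M ↦ [[0, W₁], [M, 0]]` sends invertible matrices over `w₂` to invertible matrices over
`w`, and it preserves and reflects double cosets: if `b [[0, W₁], [M, 0]] c = [[0, W₁'], [M', 0]]`
with `b`, `c` invertible upper triangular, then `b` and `c` are block upper triangular for the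
splittings `n₁ + n₂` and `n₂ + n₁` respectively, and comparing lower-left blocks gives
`b₂₂ M c₁₁ = M'`. Hence it induces an injection between the finite sets of double cosets.
-/

section UpperTriangular

variable {R : Type*} [CommRing R] {n : ℕ}

theorem isUT_one : IsUT (1 : Matrix (Fin n) (Fin n) R) :=
  ⟨blockTriangular_one, isUnit_one⟩

theorem IsUT.mul {B C : Matrix (Fin n) (Fin n) R} (hB : IsUT B) (hC : IsUT C) : IsUT (B * C) :=
  ⟨hB.1.mul hC.1, hB.2.mul hC.2⟩

theorem IsUT.inv {B : Matrix (Fin n) (Fin n) R} (hB : IsUT B) : IsUT B⁻¹ := by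
  have := hB.2.nonempty_invertible.some
  exact ⟨blockTriangular_inv_of_blockTriangular hB.1, isUnit_nonsing_inv_iff.mpr hB.2⟩

theorem sameDC_equivalence : Equivalence (@SameDC R _ n) where
  refl M := ⟨1, 1, isUT_one, isUT_one, by simp⟩
  symm := by
    rintro M M' ⟨B, C, hB, hC, rfl⟩
    refine ⟨B⁻¹, C⁻¹, hB.inv, hC.inv, ?_⟩
    simp [Matrix.mul_assoc, nonsing_inv_mul_cancel_left _ _ ((isUnit_iff_isUnit_det B).mp hB.2),
      mul_nonsing_inv_cancel_right _ _ ((isUnit_iff_isUnit_det C).mp hC.2)]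
  trans := by
    rintro M M' M'' ⟨B, C, hB, hC, rfl⟩ ⟨B', C', hB', hC', rfl⟩
    exact ⟨B' * B, C * C', hB'.mul hB, hC.mul hC', by simp only [Matrix.mul_assoc]⟩

end UpperTriangular

theorem blockTriangular_toLex_iff {R α β : Type*} [Zero R] [LT α] [LT β]
    (M : Matrix (α ⊕ β) (α ⊕ β) R) :
    M.BlockTriangular toLex ↔
      M.toBlocks₂₁ = 0 ∧ M.toBlocks₁₁.BlockTriangular id ∧ M.toBlocks₂₂.BlockTriangular id := by
  refine ⟨fun h => ⟨?_, fun i j hij => h ?_, fun i j hij => h ?_⟩, ?_⟩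
  · ext i j
    exact h (Sum.Lex.inl_lt_inr j i)
  · exact Sum.Lex.inl_lt_inl_iff.mpr hij
  · exact Sum.Lex.inr_lt_inr_iff.mpr hij
  · rintro ⟨h₂₁, h₁₁, h₂₂⟩ (i | i) (j | j) hij
    · exact h₁₁ (Sum.Lex.inl_lt_inl_iff.mp hij)
    · exact absurd hij Sum.Lex.not_inr_lt_inl
    · exact congrFun (congrFun h₂₁ i) j
    · exact h₂₂ (Sum.Lex.inr_lt_inr_iff.mp hij)

section LexBlocks

variable {R : Type*} [CommRing R]

theorem isUnit_iff_of_toBlocks₂₁_eq_zero {m p : Type*} [Fintype m] [Fintype p] [DecidableEq m]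
    [DecidableEq p] {M : Matrix (m ⊕ p) (m ⊕ p) R} (h : M.toBlocks₂₁ = 0) :
    IsUnit M ↔ IsUnit M.toBlocks₁₁ ∧ IsUnit M.toBlocks₂₂ := by
  rw [← fromBlocks_toBlocks M, h, isUnit_iff_isUnit_det, det_fromBlocks_zero₂₁, IsUnit.mul_iff,
    isUnit_iff_isUnit_det, isUnit_iff_isUnit_det]
  simp

theorem isUT_reindex_iff {a b c : ℕ} {e : Fin a ⊕ Fin b ≃ Fin c} (he : StrictMono (e ∘ ofLex))
    (M : Matrix (Fin a ⊕ Fin b) (Fin a ⊕ Fin b) R) :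
    IsUT (reindex e e M) ↔ M.toBlocks₂₁ = 0 ∧ IsUT M.toBlocks₁₁ ∧ IsUT M.toBlocks₂₂ := by
  have hlex : M.BlockTriangular e ↔ M.BlockTriangular toLex := by
    simp only [BlockTriangular]
    exact forall₂_congr fun i j => imp_congr_left (he.lt_iff_lt (a := toLex j) (b := toLex i))
  rw [IsUT, blockTriangular_reindex_iff, Function.id_comp, hlex, blockTriangular_toLex_iff,
    reindex_apply, isUnit_submatrix_equiv]
  constructor
  · rintro ⟨⟨h₂₁, h₁₁, h₂₂⟩, hM⟩
    obtain ⟨u₁₁, u₂₂⟩ := (isUnit_iff_of_toBlocks₂₁_eq_zero h₂₁).mp hM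
    exact ⟨h₂₁, ⟨h₁₁, u₁₁⟩, ⟨h₂₂, u₂₂⟩⟩
  · rintro ⟨h₂₁, ⟨h₁₁, u₁₁⟩, ⟨h₂₂, u₂₂⟩⟩
    exact ⟨⟨h₂₁, h₁₁, h₂₂⟩, (isUnit_iff_of_toBlocks₂₁_eq_zero h₂₁).mpr ⟨u₁₁, u₂₂⟩⟩

theorem strictMono_finSumFinEquiv_ofLex {a b : ℕ} :
    StrictMono (finSumFinEquiv ∘ ofLex : Fin a ⊕ₗ Fin b → Fin (a + b)) := by
  rintro (i | i) (j | j) hij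
  · change finSumFinEquiv (Sum.inl i) < finSumFinEquiv (Sum.inl j)
    simpa using Fin.strictMono_castAdd b (Sum.Lex.inl_lt_inl_iff.mp hij)
  · change finSumFinEquiv (Sum.inl i) < finSumFinEquiv (Sum.inr j)
    simp only [finSumFinEquiv_apply_left, finSumFinEquiv_apply_right, Fin.lt_def,
      Fin.val_castAdd, Fin.val_natAdd]
    omega
  · exact absurd hij Sum.Lex.not_inr_lt_inl
  · change finSumFinEquiv (Sum.inr i) < finSumFinEquiv (Sum.inr j)
    simpa using Sum.Lex.inr_lt_inr_iff.mp hij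

end LexBlocks

section Blocks

variable {R : Type*} [CommRing R] {n₁ n₂ : ℕ}

/-- The column indexing of `blk X₁ α₁ α₂ X₂`: the `n₂` columns of `X₁` and `α₂` come first. -/
abbrev blkColEquiv (n₁ n₂ : ℕ) : Fin n₂ ⊕ Fin n₁ ≃ Fin (n₁ + n₂) :=
  finSumFinEquiv.trans (finCongr (Nat.add_comm n₂ n₁))

theorem strictMono_blkColEquiv_ofLex : StrictMono (blkColEquiv n₁ n₂ ∘ ofLex) :=
  fun _ _ h => strictMono_finSumFinEquiv_ofLex h

theorem blk_eq_reindex (X₁ : Matrix (Fin n₁) (Fin n₂) R) (α₁ : Matrix (Fin n₁) (Fin n₁) R)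
    (α₂ : Matrix (Fin n₂) (Fin n₂) R) (X₂ : Matrix (Fin n₂) (Fin n₁) R) :
    blk X₁ α₁ α₂ X₂ = reindex finSumFinEquiv (blkColEquiv n₁ n₂) (fromBlocks X₁ α₁ α₂ X₂) :=
  rfl

theorem blk_map {S : Type*} [CommRing S] (f : R →+* S) (X₁ : Matrix (Fin n₁) (Fin n₂) R)
    (α₁ : Matrix (Fin n₁) (Fin n₁) R) (α₂ : Matrix (Fin n₂) (Fin n₂) R)
    (X₂ : Matrix (Fin n₂) (Fin n₁) R) :
    (blk X₁ α₁ α₂ X₂).map f = blk (X₁.map f) (α₁.map f) (α₂.map f) (X₂.map f) := by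
  simp only [blk_eq_reindex, reindex_apply, ← submatrix_map, fromBlocks_map]

theorem isUnit_blk {W : Matrix (Fin n₁) (Fin n₁) R} {M : Matrix (Fin n₂) (Fin n₂) R}
    (hW : IsUnit W) (hM : IsUnit M) : IsUnit (blk 0 W M 0) := by
  have hswap : fromBlocks 0 W M 0 = (fromBlocks W 0 0 M).submatrix id Sum.swap := by simp
  have hdiag : IsUnit (fromBlocks W 0 0 M) := by
    rw [isUnit_iff_isUnit_det, det_fromBlocks_zero₂₁]
    exact ((isUnit_iff_isUnit_det W).mp hW).mul ((isUnit_iff_isUnit_det M).mp hM)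
  rw [blk_eq_reindex, reindex_apply, hswap, submatrix_submatrix]
  exact (isUnit_submatrix_equiv finSumFinEquiv.symm
    ((blkColEquiv n₁ n₂).symm.trans (Equiv.sumComm _ _))).mpr hdiag

theorem sameDC_of_sameDC_blk {W W' : Matrix (Fin n₁) (Fin n₁) R}
    {M M' : Matrix (Fin n₂) (Fin n₂) R} (h : SameDC (blk 0 W M 0) (blk 0 W' M' 0)) :
    SameDC M M' := by
  obtain ⟨B, C, hB, hC, h⟩ := h
  obtain ⟨P, rfl⟩ := (reindex finSumFinEquiv finSumFinEquiv).surjective B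
  obtain ⟨Q, rfl⟩ := (reindex (blkColEquiv n₁ n₂) (blkColEquiv n₁ n₂)).surjective C
  obtain ⟨hP₂₁, -, hP₂₂⟩ := (isUT_reindex_iff strictMono_finSumFinEquiv_ofLex P).mp hB
  obtain ⟨hQ₂₁, hQ₁₁, -⟩ := (isUT_reindex_iff strictMono_blkColEquiv_ofLex Q).mp hC
  refine ⟨P.toBlocks₂₂, Q.toBlocks₁₁, hP₂₂, hQ₁₁, ?_⟩
  have hprod : P * fromBlocks 0 W M 0 * Q = fromBlocks 0 W' M' 0 :=
    (reindex _ _).injective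
      (by simpa only [blk_eq_reindex, reindex_apply, submatrix_mul_equiv] using h)
  rw [← fromBlocks_toBlocks P, ← fromBlocks_toBlocks Q, hP₂₁, hQ₂₁, fromBlocks_multiply,
    fromBlocks_multiply] at hprod
  simpa using congrArg toBlocks₂₁ hprod

theorem sameDC_blk_iff (W : Matrix (Fin n₁) (Fin n₁) R) {M M' : Matrix (Fin n₂) (Fin n₂) R} :
    SameDC (blk 0 W M 0) (blk 0 W M' 0) ↔ SameDC M M' := by
  refine ⟨sameDC_of_sameDC_blk, ?_⟩
  rintro ⟨B, C, hB, hC, rfl⟩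
  refine ⟨reindex finSumFinEquiv finSumFinEquiv (fromBlocks 1 0 0 B),
    reindex (blkColEquiv n₁ n₂) (blkColEquiv n₁ n₂) (fromBlocks C 0 0 1),
    (isUT_reindex_iff strictMono_finSumFinEquiv_ofLex _).mpr
      ⟨by simp, by simpa using isUT_one, by simpa⟩,
    (isUT_reindex_iff strictMono_blkColEquiv_ofLex _).mpr
      ⟨by simp, by simpa, by simpa using isUT_one⟩, ?_⟩
  simp only [blk_eq_reindex, reindex_apply, submatrix_mul_equiv, fromBlocks_multiply]
  simp [Matrix.mul_assoc]

end Blocks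

theorem isUnit_of_ite_perm_eq {R ι : Type*} [CommRing R] [Fintype ι] [DecidableEq ι]
    (σ : Equiv.Perm ι) : IsUnit (of fun i j : ι => if σ j = i then (1 : R) else 0) := by
  have h : (of fun i j : ι => if σ j = i then (1 : R) else 0) =
      (1 : Matrix ι ι R).submatrix id σ := by
    ext i j
    simp [one_apply, eq_comm]
  rw [h]
  exact (isUnit_submatrix_equiv (Equiv.refl _) σ).mpr isUnit_one

theorem exists_isUnit_map_eq {A K ι : Type*} [CommRing A] [CommRing K] [Fintype ι]
    [DecidableEq ι] (f : A →+* K) [IsLocalHom f] (hf : Function.Surjective f)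
    {w : Matrix ι ι K} (hw : IsUnit w) : ∃ W : Matrix ι ι A, IsUnit W ∧ W.map f = w := by
  set W := w.map (Function.surjInv hf)
  have hW : W.map f = w := by
    ext i j
    exact Function.surjInv_eq hf _
  refine ⟨W, ?_, hW⟩
  rw [isUnit_iff_isUnit_det]
  apply isUnit_of_map_unit f
  rw [RingHom.map_det, RingHom.mapMatrix_apply, hW, ← isUnit_iff_isUnit_det]
  exact hw

theorem Ideal.finite_of_pow_eq_bot {A : Type*} [CommRing A] {I : Ideal A} (hI : I.FG)
    [Finite (A ⧸ I)] {k : ℕ} (hk : I ^ k = ⊥) : Finite A := by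
  have := Ideal.finite_quotient_pow hI k
  rw [hk] at this
  exact Finite.of_equiv _ (RingEquiv.quotientBot A).toEquiv

theorem Nat.card_quot_le_of_iff {α β : Type*} {r : α → α → Prop} {s : β → β → Prop}
    [Finite (Quot s)] (hs : Equivalence s) (f : α → β) (hf : ∀ a a', s (f a) (f a') ↔ r a a') :
    Nat.card (Quot r) ≤ Nat.card (Quot s) := by
  refine Nat.card_le_card_of_injective (Quot.map f fun a a' h => (hf a a').mpr h) ?_
  rintro ⟨a⟩ ⟨a'⟩ h
  exact Quot.sound ((hf a a').mp (hs.eqvGen_iff.mp (Quot.eqvGen_exact h)))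

open IsLocalRing in
theorem overCount_le_overCount_blk {A : Type*} [CommRing A] [IsLocalRing A] [Finite A]
    {n₁ n₂ : ℕ} {w₁ : Matrix (Fin n₁) (Fin n₁) (A ⧸ maximalIdeal A)} (hw₁ : IsUnit w₁)
    (u₂ : Matrix (Fin n₂) (Fin n₂) (A ⧸ maximalIdeal A)) :
    overCount A u₂ ≤ overCount A (blk 0 w₁ u₂ 0) := by
  have : IsLocalHom (Ideal.Quotient.mk (maximalIdeal A)) :=
    inferInstanceAs (IsLocalHom (residue A))
  obtain ⟨W, hW, rfl⟩ := exists_isUnit_map_eq _ Ideal.Quotient.mk_surjective hw₁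
  refine Nat.card_quot_le_of_iff (sameDC_equivalence.comap Subtype.val)
    (fun M => ⟨blk 0 W M.1 0, isUnit_blk hW M.2.1, ?_⟩) fun M M' => sameDC_blk_iff W
  rw [blk_map, Matrix.map_zero _ (map_zero _), Matrix.map_zero _ (map_zero _), sameDC_blk_iff]
  exact M.2.2

theorem stmt15_general {A : Type*} [CommRing A] [IsLocalRing A]
    (π : A) (k : ℕ) (hmax : IsLocalRing.maximalIdeal A = Ideal.span {π})
    (hk0 : π ^ k = 0)
    [Finite (A ⧸ IsLocalRing.maximalIdeal A)]
    {n₁ n₂ : ℕ}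
    (σ₁ : Equiv.Perm (Fin n₁)) (σ₂ : Equiv.Perm (Fin n₂)) :
    overCount A (blk 0
        (Matrix.of fun i j : Fin n₁ =>
          if σ₁ j = i then (1 : A ⧸ IsLocalRing.maximalIdeal A) else 0)
        (Matrix.of fun i j : Fin n₂ =>
          if σ₂ j = i then (1 : A ⧸ IsLocalRing.maximalIdeal A) else 0) 0) ≥
      overCount A (Matrix.of fun i j : Fin n₂ =>
        if σ₂ j = i then (1 : A ⧸ IsLocalRing.maximalIdeal A) else 0) := by
  have hfg : (IsLocalRing.maximalIdeal A).FG := ⟨{π}, by rw [hmax]; simp⟩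
  have hpow : IsLocalRing.maximalIdeal A ^ k = ⊥ := by
    rw [hmax, Ideal.span_singleton_pow, hk0, Ideal.span_singleton_eq_bot]
  have : Finite A := Ideal.finite_of_pow_eq_bot hfg hpow
  exact overCount_le_overCount_blk (isUnit_of_ite_perm_eq σ₁) _

theorem stmt15 {A : Type*} [CommRing A] [IsLocalRing A] [IsPrincipalIdealRing A]
    (π : A) (k : ℕ) (hmax : IsLocalRing.maximalIdeal A = Ideal.span {π})
    (hk0 : π ^ k = 0) (hk1 : π ^ (k - 1) ≠ 0)
    [Finite (A ⧸ IsLocalRing.maximalIdeal A)]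
    {n₁ n₂ : ℕ} (hn₁ : 1 ≤ n₁) (hn₂ : 1 ≤ n₂)
    (σ₁ : Equiv.Perm (Fin n₁)) (σ₂ : Equiv.Perm (Fin n₂)) :
    overCount A (blk 0
        (Matrix.of fun i j : Fin n₁ =>
          if σ₁ j = i then (1 : A ⧸ IsLocalRing.maximalIdeal A) else 0)
        (Matrix.of fun i j : Fin n₂ =>
          if σ₂ j = i then (1 : A ⧸ IsLocalRing.maximalIdeal A) else 0) 0) ≥
      overCount A (Matrix.of fun i j : Fin n₂ =>
        if σ₂ j = i then (1 : A ⧸ IsLocalRing.maximalIdeal A) else 0) :=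
  stmt15_general π k hmax hk0 σ₁ σ₂
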